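/- Let ψ: ℝⁿ → ℝ ∪ {+∞} be convex, F₁, F₂: ℝ → (0,∞) measurable, and h ∈ Φ ∪ Ψ. Then for every linear map T on ℝⁿ with |det T| = 1, one has as^{orlicz}_{h,F₁,F₂}(ψ∘T) = as^{orlicz}_{h,F₁,F₂}(ψ) and G^{orlicz}_{h,F₁,F₂}(ψ∘T) = G^{orlicz}_{h,F₁,F₂}(ψ). -/

import Mathlib

open MeasureTheory Real Set
open scoped RealInnerProductSpace

noncomputable section

/-- `ℝⁿ`: `n`-dimensional Euclidean space. -/
abbrev En (n : ℕ) := EuclideanSpace ℝ (Fin n)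

variable {n : ℕ}

/-- The Legendre transform `ψ*(y) = sup_x (⟨x,y⟩ - ψ(x))`. -/
def legendreT (ψ : En n → ℝ) (y : En n) : ℝ :=
  sSup {r : ℝ | ∃ x : En n, r = ⟪x, y⟫ - ψ x}

/-- The determinant of the Hessian `∇²ψ(x)` (the Hessian being the derivative of the
gradient). -/
def hessDet (ψ : En n → ℝ) (x : En n) : ℝ :=
  LinearMap.det ((fderiv ℝ (gradient ψ) x).toLinearMap)

/-- `X_ψ`: the set of points where the Hessian of `ψ` exists and is invertible. -/
def Xset (ψ : En n → ℝ) : Set (En n) :=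
  {x | DifferentiableAt ℝ ψ x ∧ DifferentiableAt ℝ (gradient ψ) x ∧ hessDet ψ x ≠ 0}

/-- `I(g, φ) = ∫_{X_φ} g`. -/
def Ifun (φ g : En n → ℝ) : ℝ := ∫ y in Xset φ, g y

/-- Membership in `F⁺_φ`: positive on `X_φ` and integrable there with positive integral. -/
def FplusOn (φ g : En n → ℝ) : Prop :=
  (∀ y ∈ Xset φ, 0 < g y) ∧ IntegrableOn g (Xset φ) ∧ 0 < Ifun φ g

/-- Log-concavity of `g` on a set `S`. -/
def IsLogConcaveOn (S : Set (En n)) (g : En n → ℝ) : Prop :=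
  (∀ x ∈ S, 0 ≤ g x) ∧
    ∀ x ∈ S, ∀ y ∈ S, ∀ a b : ℝ, 0 ≤ a → 0 ≤ b → a + b = 1 →
      a • x + b • y ∈ S → g x ^ a * g y ^ b ≤ g (a • x + b • y)

/-- The general `L_p` affine surface area `as_{p,F₁,F₂}(ψ)`. -/
def aspGen (p : ℝ) (F₁ F₂ : ℝ → ℝ) (ψ : En n → ℝ) : ℝ :=
  ∫ x in Xset ψ, (F₁ (ψ x)) ^ ((n : ℝ) / ((n : ℝ) + p)) *
    (F₂ (⟪x, gradient ψ x⟫ - ψ x) * hessDet ψ x) ^ (p / ((n : ℝ) + p))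

/-- `V_{p,F₁,F₂}(ψ, g)`. -/
def Vp (p : ℝ) (F₁ F₂ : ℝ → ℝ) (ψ g : En n → ℝ) : ℝ :=
  ∫ x in Xset ψ,
    (F₂ (⟪x, gradient ψ x⟫ - ψ x) / g (gradient ψ x)) ^ (p / (n : ℝ)) * F₁ (ψ x)

/-- The Orlicz mixed integral `V_{h,F₁,F₂}(ψ, g)`. -/
def Vh (h F₁ F₂ : ℝ → ℝ) (ψ g : En n → ℝ) : ℝ :=
  ∫ x in Xset ψ, h (g (gradient ψ x) / F₂ (⟪x, gradient ψ x⟫ - ψ x)) * F₁ (ψ x)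

/-- The class `Φ`: positive continuous functions on `(0,∞)` that are constant or
strictly convex. -/
def PhiClass (h : ℝ → ℝ) : Prop :=
  ContinuousOn h (Ioi 0) ∧ (∀ t ∈ Ioi (0 : ℝ), 0 < h t) ∧
    ((∃ c, ∀ t ∈ Ioi (0 : ℝ), h t = c) ∨ StrictConvexOn ℝ (Ioi 0) h)

/-- The class `Ψ`: positive continuous functions on `(0,∞)` that are constant or
increasing and strictly concave. -/
def PsiClass (h : ℝ → ℝ) : Prop :=
  ContinuousOn h (Ioi 0) ∧ (∀ t ∈ Ioi (0 : ℝ), 0 < h t) ∧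
    ((∃ c, ∀ t ∈ Ioi (0 : ℝ), h t = c) ∨
      (StrictMonoOn h (Ioi 0) ∧ StrictConcaveOn ℝ (Ioi 0) h))

/-- `(√(2π))ⁿ`. -/
def sqrtTwoPiPow (n : ℕ) : ℝ := (Real.sqrt (2 * π)) ^ n

/-- The general Orlicz affine surface area (infimum version; used when `h ∈ Φ`). -/
def asOrliczInf (h F₁ F₂ : ℝ → ℝ) (ψ : En n → ℝ) : ℝ :=
  sInf {r | ∃ g : En n → ℝ, FplusOn (legendreT ψ) g ∧
    Ifun (legendreT ψ) g = sqrtTwoPiPow n ∧ r = Vh h F₁ F₂ ψ g}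

/-- The general Orlicz affine surface area (supremum version; used when `h ∈ Ψ`). -/
def asOrliczSup (h F₁ F₂ : ℝ → ℝ) (ψ : En n → ℝ) : ℝ :=
  sSup {r | ∃ g : En n → ℝ, FplusOn (legendreT ψ) g ∧
    Ifun (legendreT ψ) g = sqrtTwoPiPow n ∧ r = Vh h F₁ F₂ ψ g}

/-- The general Orlicz geominimal surface area (infimum version; used when `h ∈ Φ`). -/
def GOrliczInf (h F₁ F₂ : ℝ → ℝ) (ψ : En n → ℝ) : ℝ :=
  sInf {r | ∃ g : En n → ℝ, FplusOn (legendreT ψ) g ∧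
    IsLogConcaveOn (Xset (legendreT ψ)) g ∧
    Ifun (legendreT ψ) g = sqrtTwoPiPow n ∧ r = Vh h F₁ F₂ ψ g}

/-- The general Orlicz geominimal surface area (supremum version; used when `h ∈ Ψ`). -/
def GOrliczSup (h F₁ F₂ : ℝ → ℝ) (ψ : En n → ℝ) : ℝ :=
  sSup {r | ∃ g : En n → ℝ, FplusOn (legendreT ψ) g ∧
    IsLogConcaveOn (Xset (legendreT ψ)) g ∧
    Ifun (legendreT ψ) g = sqrtTwoPiPow n ∧ r = Vh h F₁ F₂ ψ g}

/-- The general `L_p` geominimal surface area (infimum version; used when `p ≥ 0`). -/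
def GpInf (p : ℝ) (F₁ F₂ : ℝ → ℝ) (ψ : En n → ℝ) : ℝ :=
  sInf {r | ∃ g : En n → ℝ, FplusOn (legendreT ψ) g ∧
    IsLogConcaveOn (Xset (legendreT ψ)) g ∧
    r = (Vp p F₁ F₂ ψ g) ^ ((n : ℝ) / ((n : ℝ) + p)) *
        (Ifun (legendreT ψ) g) ^ (p / ((n : ℝ) + p))}

/-- The general `L_p` geominimal surface area (supremum version; used when `-n ≠ p < 0`). -/
def GpSup (p : ℝ) (F₁ F₂ : ℝ → ℝ) (ψ : En n → ℝ) : ℝ :=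
  sSup {r | ∃ g : En n → ℝ, FplusOn (legendreT ψ) g ∧
    IsLogConcaveOn (Xset (legendreT ψ)) g ∧
    r = (Vp p F₁ F₂ ψ g) ^ ((n : ℝ) / ((n : ℝ) + p)) *
        (Ifun (legendreT ψ) g) ^ (p / ((n : ℝ) + p))}

/-- `F̆(t) = sup{√(F₁(t₁)F₂(t₂)) : (t₁+t₂)/2 ≥ t}`. -/
def Fbreve (F₁ F₂ : ℝ → ℝ) (t : ℝ) : ℝ :=
  sSup {r | ∃ t₁ t₂ : ℝ, t ≤ (t₁ + t₂) / 2 ∧ r = Real.sqrt (F₁ t₁ * F₂ t₂)}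

/-- `I(F, c) = ∫_{ℝⁿ} F(c²‖x‖²/2) dx`. -/
def IF (n : ℕ) (F : ℝ → ℝ) (c : ℝ) : ℝ := ∫ x : En n, F (c ^ 2 * ‖x‖ ^ 2 / 2)

/-!
The substitution `x ↦ T x` turns `∇(ψ ∘ T)(x)` into `Tᵀ ∇ψ(T x)`, the Legendre transform
`(ψ ∘ T)*` into `ψ* ∘ T⁻ᵀ`, and `X_{ψ ∘ T}` into `T⁻¹ X_ψ`. Hence `g ↦ g ∘ T⁻ᵀ` is a bijection
between the densities admissible for `ψ` and those admissible for `ψ ∘ T`; it preserves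
positivity and log-concavity, and since `|det T| = 1` it preserves `I(g, ·)` and the mixed
integral `V_{h,F₁,F₂}`. So the infima and suprema defining the Orlicz affine and geominimal
surface areas of `ψ` and `ψ ∘ T` range over the same set of values.
-/

section Adjoint

variable {𝕜 E F : Type*} [RCLike 𝕜]
  [NormedAddCommGroup E] [InnerProductSpace 𝕜 E] [CompleteSpace E]
  [NormedAddCommGroup F] [InnerProductSpace 𝕜 F] [CompleteSpace F]

def ContinuousLinearEquiv.adjoint (B : E ≃L[𝕜] F) : F ≃L[𝕜] E :=
  ContinuousLinearEquiv.equivOfInverse (ContinuousLinearMap.adjoint (B : E →L[𝕜] F))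
    (ContinuousLinearMap.adjoint (B.symm : F →L[𝕜] E))
    (fun x => by
      rw [← ContinuousLinearMap.comp_apply, ← ContinuousLinearMap.adjoint_comp,
        B.coe_comp_coe_symm, ContinuousLinearMap.adjoint_id, ContinuousLinearMap.id_apply])
    (fun x => by
      rw [← ContinuousLinearMap.comp_apply, ← ContinuousLinearMap.adjoint_comp,
        B.coe_symm_comp_coe, ContinuousLinearMap.adjoint_id, ContinuousLinearMap.id_apply])

@[simp]
theorem ContinuousLinearEquiv.coe_adjoint (B : E ≃L[𝕜] F) :
    (B.adjoint : F →L[𝕜] E) = ContinuousLinearMap.adjoint (B : E →L[𝕜] F) :=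
  rfl

theorem ContinuousLinearEquiv.adjoint_symm_apply_adjoint_apply (B : E ≃L[𝕜] E) (v : E) :
    B.symm.adjoint (ContinuousLinearMap.adjoint (B : E →L[𝕜] E) v) = v :=
  B.adjoint.symm_apply_apply v

end Adjoint

theorem ContinuousLinearMap.det_adjoint {E : Type*} [NormedAddCommGroup E]
    [InnerProductSpace ℝ E] [FiniteDimensional ℝ E] (A : E →L[ℝ] E) :
    (ContinuousLinearMap.adjoint A).det = A.det := by
  let b := stdOrthonormalBasis ℝ E
  rw [ContinuousLinearMap.det, ← ContinuousLinearMap.adjoint_toLinearMap,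
    ← LinearMap.det_toMatrix b.toBasis, LinearMap.toMatrix_adjoint b b,
    Matrix.det_conjTranspose, star_trivial, LinearMap.det_toMatrix]

theorem ContinuousLinearEquiv.measurePreserving_of_abs_det_eq_one {E : Type*}
    [NormedAddCommGroup E] [NormedSpace ℝ E] [FiniteDimensional ℝ E] [MeasurableSpace E]
    [BorelSpace E] (μ : Measure E) [μ.IsAddHaarMeasure] (B : E ≃L[ℝ] E)
    (hB : |(B : E →L[ℝ] E).det| = 1) : MeasurePreserving B μ μ := by
  have hdet : (B : E →L[ℝ] E).det ≠ 0 := (LinearEquiv.isUnit_det' B.toLinearEquiv).ne_zero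
  have hmap := Measure.map_linearMap_addHaar_eq_smul_addHaar μ hdet
  rw [ContinuousLinearMap.coe_coe, ContinuousLinearEquiv.coe_coe] at hmap
  exact ⟨B.continuous.measurable, by rw [hmap, abs_inv, hB, inv_one, ENNReal.ofReal_one, one_smul]⟩

theorem gradient_comp_continuousLinearEquiv {E F : Type*}
    [NormedAddCommGroup E] [InnerProductSpace ℝ E] [CompleteSpace E]
    [NormedAddCommGroup F] [InnerProductSpace ℝ F] [CompleteSpace F]
    (f : F → ℝ) (B : E ≃L[ℝ] F) (x : E) :
    gradient (fun y => f (B y)) x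
      = ContinuousLinearMap.adjoint (B : E →L[ℝ] F) (gradient f (B x)) := by
  apply ext_inner_right ℝ
  intro w
  rw [ContinuousLinearMap.adjoint_inner_left, gradient, gradient,
    InnerProductSpace.toDual_symm_apply, InnerProductSpace.toDual_symm_apply]
  exact congrArg (· w) (B.comp_right_fderiv (f := f))

theorem hessDet_comp (f : En n → ℝ) (B : En n ≃L[ℝ] En n) (x : En n) :
    hessDet (fun y => f (B y)) x = (B : En n →L[ℝ] En n).det ^ 2 * hessDet f (B x) := by
  have hgrad : gradient (fun y => f (B y)) = ⇑B.adjoint ∘ (gradient f ∘ ⇑B) :=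
    funext (gradient_comp_continuousLinearEquiv f B)
  rw [hessDet, hessDet, hgrad, B.adjoint.comp_fderiv, B.comp_right_fderiv,
    ContinuousLinearMap.toLinearMap_comp, ContinuousLinearMap.toLinearMap_comp,
    LinearMap.det_comp, LinearMap.det_comp, B.coe_adjoint]
  linear_combination (fderiv ℝ (gradient f) (B x)).det * (B : En n →L[ℝ] En n).det *
    ContinuousLinearMap.det_adjoint (B : En n →L[ℝ] En n)

theorem Xset_comp (f : En n → ℝ) (B : En n ≃L[ℝ] En n) :
    Xset (fun x => f (B x)) = ⇑B ⁻¹' Xset f := by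
  have hgrad : gradient (fun y => f (B y)) = ⇑B.adjoint ∘ (gradient f ∘ ⇑B) :=
    funext (gradient_comp_continuousLinearEquiv f B)
  have hdet : (B : En n →L[ℝ] En n).det ≠ 0 := (LinearEquiv.isUnit_det' B.toLinearEquiv).ne_zero
  ext x
  refine and_congr B.comp_right_differentiableAt_iff (and_congr ?_ ?_)
  · rw [hgrad, B.adjoint.comp_differentiableAt_iff, B.comp_right_differentiableAt_iff]
  · rw [hessDet_comp, mul_ne_zero_iff, pow_ne_zero_iff two_ne_zero]
    exact and_iff_right hdet

theorem legendreT_comp (ψ : En n → ℝ) (B : En n ≃L[ℝ] En n) :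
    legendreT (fun x => ψ (B x)) = fun y => legendreT ψ (B.symm.adjoint y) := by
  funext y
  have inner_eq : ∀ u, ⟪u, B.symm.adjoint y⟫ = ⟪B.symm u, y⟫ := fun u =>
    ContinuousLinearMap.adjoint_inner_right _ u y
  unfold legendreT
  congr 1
  ext r
  constructor
  · rintro ⟨x, rfl⟩
    exact ⟨B x, by rw [inner_eq, B.symm_apply_apply]⟩
  · rintro ⟨u, rfl⟩
    exact ⟨B.symm u, by simp only [inner_eq, B.apply_symm_apply]⟩

theorem IsLogConcaveOn.preimage {s : Set (En n)} {g : En n → ℝ} (hg : IsLogConcaveOn s g)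
    (B : En n →ₗ[ℝ] En n) : IsLogConcaveOn (⇑B ⁻¹' s) (g ∘ ⇑B) := by
  refine ⟨fun x hx => hg.1 (B x) hx, fun x hx y hy a b ha hb hab hmem => ?_⟩
  have hlin : B (a • x + b • y) = a • B x + b • B y := by simp
  simpa only [Function.comp_apply, hlin] using
    hg.2 (B x) hx (B y) hy a b ha hb hab (by rwa [mem_preimage, hlin] at hmem)

theorem isLogConcaveOn_preimage_iff (B : En n ≃L[ℝ] En n) (s : Set (En n)) (g : En n → ℝ) :
    IsLogConcaveOn (⇑B ⁻¹' s) (g ∘ ⇑B) ↔ IsLogConcaveOn s g := by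
  refine ⟨fun h => ?_, fun h => h.preimage (B : En n →ₗ[ℝ] En n)⟩
  convert h.preimage (B.symm : En n →ₗ[ℝ] En n) using 1
  · ext x; simp
  · ext x; simp

section ChangeOfVariables

variable {B : En n ≃L[ℝ] En n} (hB : MeasurePreserving B volume volume)
include hB

theorem Ifun_comp (φ g : En n → ℝ) :
    Ifun (fun y => φ (B y)) (g ∘ ⇑B) = Ifun φ g := by
  rw [Ifun, Xset_comp]
  exact hB.setIntegral_preimage_emb B.toHomeomorph.measurableEmbedding g _

theorem FplusOn_comp_iff (φ g : En n → ℝ) :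
    FplusOn (fun y => φ (B y)) (g ∘ ⇑B) ↔ FplusOn φ g := by
  rw [FplusOn, FplusOn, Ifun_comp hB, Xset_comp,
    hB.integrableOn_comp_preimage B.toHomeomorph.measurableEmbedding]
  simp only [mem_preimage, Function.comp_apply,
    B.surjective.forall (p := fun y => y ∈ Xset φ → 0 < g y)]

theorem Vh_comp (h F₁ F₂ : ℝ → ℝ) (ψ g : En n → ℝ) :
    Vh h F₁ F₂ (fun x => ψ (B x)) (g ∘ ⇑B.symm.adjoint) = Vh h F₁ F₂ ψ g := by
  rw [Vh, Vh, Xset_comp]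
  refine Eq.trans ?_ (hB.setIntegral_preimage_emb B.toHomeomorph.measurableEmbedding _ _)
  congr 1 with x
  simp only [Function.comp_apply, gradient_comp_continuousLinearEquiv,
    B.adjoint_symm_apply_adjoint_apply, ContinuousLinearMap.adjoint_inner_right,
    ContinuousLinearEquiv.coe_coe]

end ChangeOfVariables

theorem statement3_general (n : ℕ) (ψ : En n → ℝ) (F₁ F₂ h : ℝ → ℝ)
    (T : En n ≃L[ℝ] En n)
    (hT : |LinearMap.det ((T : En n →L[ℝ] En n).toLinearMap)| = 1) :
    (PhiClass h →
      asOrliczInf h F₁ F₂ (fun x => ψ (T x)) = asOrliczInf h F₁ F₂ ψ ∧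
      GOrliczInf h F₁ F₂ (fun x => ψ (T x)) = GOrliczInf h F₁ F₂ ψ) ∧
    (PsiClass h →
      asOrliczSup h F₁ F₂ (fun x => ψ (T x)) = asOrliczSup h F₁ F₂ ψ ∧
      GOrliczSup h F₁ F₂ (fun x => ψ (T x)) = GOrliczSup h F₁ F₂ ψ) := by
  have hT_vol : MeasurePreserving T volume volume :=
    T.measurePreserving_of_abs_det_eq_one volume hT
  have hTinvAdj_vol : MeasurePreserving T.symm.adjoint volume volume := by
    refine T.symm.adjoint.measurePreserving_of_abs_det_eq_one volume ?_
    rw [ContinuousLinearEquiv.coe_adjoint, ContinuousLinearMap.det_adjoint,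
      ContinuousLinearEquiv.det_coe_symm, abs_inv]
    exact inv_eq_one.2 hT
  have reparam : Function.Surjective fun g : En n → ℝ => g ∘ ⇑T.symm.adjoint :=
    fun g => ⟨g ∘ ⇑T.symm.adjoint.symm, funext fun y => by simp⟩
  refine ⟨fun _ => ⟨?_, ?_⟩, fun _ => ⟨?_, ?_⟩⟩ <;>
  · simp only [asOrliczInf, asOrliczSup, GOrliczInf, GOrliczSup]
    congr 1
    ext r
    rw [mem_ofPred_eq, mem_ofPred_eq, legendreT_comp ψ T, reparam.exists]
    simp only [FplusOn_comp_iff hTinvAdj_vol, Ifun_comp hTinvAdj_vol, Vh_comp hT_vol, Xset_comp,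
      isLogConcaveOn_preimage_iff]

/-- `SL±(n)`-invariance of the general Orlicz affine and geominimal
surface areas. -/
theorem statement3 (n : ℕ) (ψ : En n → ℝ) (F₁ F₂ h : ℝ → ℝ)
    (hψ : ConvexOn ℝ Set.univ ψ)
    (hF₁m : Measurable F₁) (hF₂m : Measurable F₂)
    (hF₁pos : ∀ t, 0 < F₁ t) (hF₂pos : ∀ t, 0 < F₂ t)
    (hclass : PhiClass h ∨ PsiClass h)
    (T : En n ≃L[ℝ] En n)
    (hT : |LinearMap.det ((T : En n →L[ℝ] En n).toLinearMap)| = 1) :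
    (PhiClass h →
      asOrliczInf h F₁ F₂ (fun x => ψ (T x)) = asOrliczInf h F₁ F₂ ψ ∧
      GOrliczInf h F₁ F₂ (fun x => ψ (T x)) = GOrliczInf h F₁ F₂ ψ) ∧
    (PsiClass h →
      asOrliczSup h F₁ F₂ (fun x => ψ (T x)) = asOrliczSup h F₁ F₂ ψ ∧
      GOrliczSup h F₁ F₂ (fun x => ψ (T x)) = GOrliczSup h F₁ F₂ ψ) :=
  statement3_general n ψ F₁ F₂ h T hT
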